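/- Let V be the free ℤ[c]-module on v₊, v₋ and define Khovanov's c-deformed structure: ε_c(1)=v₊, η_c(v₊)=−c, η_c(v₋)=1, Δ_c(v₊)=v₊⊗v₋+v₋⊗v₊+c·v₋⊗v₋, Δ_c(v₋)=v₋⊗v₋, m_c(v₊⊗v₊)=v₊, m_c(v₊⊗v₋)=m_c(v₋⊗v₊)=v₋, m_c(v₋⊗v₋)=0. Then (V, m_c, ε_c, Δ_c, η_c) is a commutative Frobenius algebra over ℤ[c], and the sphere evaluation η_c ∘ ε_c : ℤ[c] → ℤ[c] is multiplication by −c. -/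
import Mathlib


/-!
Khovanov's `c`-deformed Frobenius algebra over `ℤ[c]` (Section 9.5 of Bar-Natan's
paper). We model `V = R⟨v₊, v₋⟩` as `R × R` with `v₊ = (1,0)`, `v₋ = (0,1)`,
where `R = ℤ[c]`.
-/

open TensorProduct

/-- The ring `ℤ[c]`. -/
abbrev R : Type := Polynomial ℤ

/-- The variable `c`. -/
noncomputable def cc : R := Polynomial.X

abbrev V : Type := R × R

noncomputable def vp : V := (1, 0)
noncomputable def vm : V := (0, 1)

/-- The multiplication `m_c`: `m_c(v₊⊗v₊)=v₊`, `m_c(v₊⊗v₋)=m_c(v₋⊗v₊)=v₋`,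
`m_c(v₋⊗v₋)=0`. -/
noncomputable def mB : V →ₗ[R] V →ₗ[R] V :=
  LinearMap.mk₂ R (fun a b => (a.1 * b.1, a.1 * b.2 + a.2 * b.1))
    (by intros; simp only [Prod.fst_add, Prod.snd_add, Prod.smul_fst, Prod.smul_snd,
      smul_eq_mul, Prod.mk_add_mk, Prod.smul_mk, Prod.mk.injEq]; constructor <;> ring)
    (by intros; simp only [Prod.fst_add, Prod.snd_add, Prod.smul_fst, Prod.smul_snd,
      smul_eq_mul, Prod.mk_add_mk, Prod.smul_mk, Prod.mk.injEq]; constructor <;> ring)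
    (by intros; simp only [Prod.fst_add, Prod.snd_add, Prod.smul_fst, Prod.smul_snd,
      smul_eq_mul, Prod.mk_add_mk, Prod.smul_mk, Prod.mk.injEq]; constructor <;> ring)
    (by intros; simp only [Prod.fst_add, Prod.snd_add, Prod.smul_fst, Prod.smul_snd,
      smul_eq_mul, Prod.mk_add_mk, Prod.smul_mk, Prod.mk.injEq]; constructor <;> ring)

noncomputable def mV : V ⊗[R] V →ₗ[R] V := TensorProduct.lift mB

/-- The unit `ε_c(1) = v₊`. -/
noncomputable def εV : R →ₗ[R] V := LinearMap.toSpanSingleton R V vp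

/-- The counit `η_c(v₊) = −c`, `η_c(v₋) = 1`. -/
noncomputable def ηV : V →ₗ[R] R := LinearMap.snd R R R - cc • LinearMap.fst R R R

/-- The comultiplication `Δ_c(v₊)=v₊⊗v₋+v₋⊗v₊+c·v₋⊗v₋`, `Δ_c(v₋)=v₋⊗v₋`. -/
noncomputable def ΔV : V →ₗ[R] V ⊗[R] V :=
  (LinearMap.toSpanSingleton R (V ⊗[R] V) (vp ⊗ₜ vm + vm ⊗ₜ vp + cc • (vm ⊗ₜ vm))).comp
    (LinearMap.fst R R R)
  + (LinearMap.toSpanSingleton R (V ⊗[R] V) (vm ⊗ₜ vm)).comp (LinearMap.snd R R R)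

lemma mV_tmul (a b : V) : mV (a ⊗ₜ b) = (a.1 * b.1, a.1 * b.2 + a.2 * b.1) := by
  simp [mV, mB]

lemma ΔV_apply (a : V) :
    ΔV a = a.1 • (vp ⊗ₜ vm + vm ⊗ₜ vp + cc • (vm ⊗ₜ[R] vm)) + a.2 • (vm ⊗ₜ[R] vm) := by
  simp [ΔV, LinearMap.toSpanSingleton_apply]

lemma ηV_apply (a : V) : ηV a = a.2 - cc * a.1 := by
  simp [ηV, smul_eq_mul]

lemma εV_apply (r : R) : εV r = r • vp := by
  simp [εV, LinearMap.toSpanSingleton_apply]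

lemma V_ext (a : V) : a = a.1 • vp + a.2 • vm := by
  simp [vp, vm, Prod.ext_iff]


lemma coassoc_aux (a : V) : (TensorProduct.assoc R V V V)
      ((TensorProduct.map ΔV (LinearMap.id : V →ₗ[R] V)) (ΔV a))
    = (TensorProduct.map (LinearMap.id : V →ₗ[R] V) ΔV) (ΔV a) := by
  have hvp1 : vp.1 = 1 := rfl
  have hvp2 : vp.2 = 0 := rfl
  have hvm1 : vm.1 = 0 := rfl
  have hvm2 : vm.2 = 1 := rfl
  simp only [ΔV_apply, hvp1, hvp2, hvm1, hvm2, one_smul, zero_smul, smul_zero,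
    add_zero, zero_add, zero_tmul, tmul_zero, smul_add, smul_smul, tmul_add, add_tmul,
    ← smul_tmul', tmul_smul, map_add, map_smul, TensorProduct.map_tmul, assoc_tmul,
    LinearMap.id_coe, id_eq]
  module

lemma cocomm_aux (a : V) : (TensorProduct.comm R V V) (ΔV a) = ΔV a := by
  have hvp1 : vp.1 = 1 := rfl
  have hvp2 : vp.2 = 0 := rfl
  have hvm1 : vm.1 = 0 := rfl
  have hvm2 : vm.2 = 1 := rfl
  simp only [ΔV_apply, hvp1, hvp2, hvm1, hvm2, one_smul, zero_smul, smul_zero,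
    add_zero, zero_add, zero_tmul, tmul_zero, smul_add, smul_smul, tmul_add, add_tmul,
    ← smul_tmul', tmul_smul, map_add, map_smul, comm_tmul]
  module

lemma counit_left_aux (a : V) :
    (TensorProduct.lid R V) ((TensorProduct.map ηV (LinearMap.id : V →ₗ[R] V)) (ΔV a)) = a := by
  have hvp1 : vp.1 = 1 := rfl
  have hvp2 : vp.2 = 0 := rfl
  have hvm1 : vm.1 = 0 := rfl
  have hvm2 : vm.2 = 1 := rfl
  conv_rhs => rw [V_ext a]
  simp only [ΔV_apply, hvp1, hvp2, hvm1, hvm2, one_smul, zero_smul, smul_zero,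
    add_zero, zero_add, zero_tmul, tmul_zero, smul_add, smul_smul, tmul_add, add_tmul,
    ← smul_tmul', tmul_smul, map_add, map_smul, TensorProduct.map_tmul, lid_tmul,
    LinearMap.id_coe, id_eq, ηV_apply, smul_eq_mul, mul_zero, mul_one, sub_zero,
    zero_sub]
  module

lemma counit_right_aux (a : V) :
    (TensorProduct.rid R V) ((TensorProduct.map (LinearMap.id : V →ₗ[R] V) ηV) (ΔV a)) = a := by
  have hvp1 : vp.1 = 1 := rfl
  have hvp2 : vp.2 = 0 := rfl
  have hvm1 : vm.1 = 0 := rfl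
  have hvm2 : vm.2 = 1 := rfl
  conv_rhs => rw [V_ext a]
  simp only [ΔV_apply, hvp1, hvp2, hvm1, hvm2, one_smul, zero_smul, smul_zero,
    add_zero, zero_add, zero_tmul, tmul_zero, smul_add, smul_smul, tmul_add, add_tmul,
    ← smul_tmul', tmul_smul, map_add, map_smul, TensorProduct.map_tmul, rid_tmul,
    LinearMap.id_coe, id_eq, ηV_apply, smul_eq_mul, mul_zero, mul_one, sub_zero,
    zero_sub]
  module

lemma frobenius_aux (a b : V) : (TensorProduct.map mV (LinearMap.id : V →ₗ[R] V))
      ((TensorProduct.assoc R V V V).symm (a ⊗ₜ ΔV b)) = ΔV (mV (a ⊗ₜ b)) := by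
  have hvm1 : vm.1 = 0 := rfl
  have hvm2 : vm.2 = 1 := rfl
  have m1 : ∀ x : V, mV (x ⊗ₜ vp) = x := by
    intro x; simp [mV_tmul, vp]
  have m2 : ∀ x : V, mV (x ⊗ₜ vm) = x.1 • vm := by
    intro x; rw [mV_tmul, hvm1, hvm2]; simp [vm, Prod.ext_iff]
  rw [ΔV_apply b, mV_tmul, ΔV_apply]
  simp only [tmul_add, tmul_smul]
  simp only [map_add, map_smul]
  simp only [assoc_symm_tmul, TensorProduct.map_tmul, LinearMap.id_coe, id_eq, m1, m2]
  have ht : a ⊗ₜ[R] vm = a.1 • (vp ⊗ₜ[R] vm) + a.2 • (vm ⊗ₜ[R] vm) := by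
    conv_lhs => rw [V_ext a]
    rw [add_tmul, smul_tmul', smul_tmul']
  rw [ht]
  simp only [← smul_tmul']
  module

/-- `(V, m_c, ε_c, Δ_c, η_c)` is a commutative Frobenius algebra over `ℤ[c]`, and
the sphere evaluation `η_c ∘ ε_c` is multiplication by `−c`. -/
theorem khovanov_c_frobenius :
    (mV (vp ⊗ₜ vp) = vp ∧ mV (vp ⊗ₜ vm) = vm ∧ mV (vm ⊗ₜ vp) = vm ∧ mV (vm ⊗ₜ vm) = 0) ∧
    (εV 1 = vp) ∧
    (ΔV vp = vp ⊗ₜ vm + vm ⊗ₜ vp + cc • (vm ⊗ₜ vm) ∧ ΔV vm = vm ⊗ₜ vm) ∧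
    (ηV vp = -cc ∧ ηV vm = 1) ∧
    -- m_c is associative
    (∀ a b c : V, mV (mV (a ⊗ₜ b) ⊗ₜ c) = mV (a ⊗ₜ mV (b ⊗ₜ c))) ∧
    -- m_c is commutative
    (∀ a b : V, mV (a ⊗ₜ b) = mV (b ⊗ₜ a)) ∧
    -- ε_c(1) is a unit
    (∀ a : V, mV (εV 1 ⊗ₜ a) = a ∧ mV (a ⊗ₜ εV 1) = a) ∧
    -- Δ_c is coassociative
    (∀ a : V, (TensorProduct.assoc R V V V)
        ((TensorProduct.map ΔV (LinearMap.id : V →ₗ[R] V)) (ΔV a))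
      = (TensorProduct.map (LinearMap.id : V →ₗ[R] V) ΔV) (ΔV a)) ∧
    -- Δ_c is cocommutative
    (∀ a : V, (TensorProduct.comm R V V) (ΔV a) = ΔV a) ∧
    -- η_c is a counit
    (∀ a : V, (TensorProduct.lid R V) ((TensorProduct.map ηV (LinearMap.id : V →ₗ[R] V)) (ΔV a)) = a
      ∧ (TensorProduct.rid R V) ((TensorProduct.map (LinearMap.id : V →ₗ[R] V) ηV) (ΔV a)) = a) ∧
    -- the Frobenius relation
    (∀ a b : V, (TensorProduct.map mV (LinearMap.id : V →ₗ[R] V))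
        ((TensorProduct.assoc R V V V).symm (a ⊗ₜ ΔV b)) = ΔV (mV (a ⊗ₜ b))) ∧
    -- the sphere relation S_c: η_c ∘ ε_c is multiplication by −c
    (∀ r : R, ηV (εV r) = -cc * r) := by
  have hvp1 : vp.1 = 1 := rfl
  have hvp2 : vp.2 = 0 := rfl
  have hvm1 : vm.1 = 0 := rfl
  have hvm2 : vm.2 = 1 := rfl
  refine ⟨⟨?_, ?_, ?_, ?_⟩, ?_, ⟨?_, ?_⟩, ⟨?_, ?_⟩, ?_, ?_, ?_, ?_, ?_, ?_, ?_, ?_⟩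
  · simp [mV_tmul, vp, vm]
  · simp [mV_tmul, vp, vm]
  · simp [mV_tmul, vp, vm]
  · simp [mV_tmul, vp, vm, Prod.ext_iff]
  · simp [εV_apply]
  · simp [ΔV_apply, hvp1, hvp2]
  · simp [ΔV_apply, hvm1, hvm2]
  · simp [ηV_apply, hvp1, hvp2]
  · simp [ηV_apply, hvm1, hvm2]
  · intro a b c
    simp only [mV_tmul, Prod.ext_iff]
    constructor <;> ring
  · intro a b
    simp only [mV_tmul, Prod.ext_iff]
    constructor <;> ring
  · intro a
    constructor <;>
    · simp only [εV_apply, one_smul, mV_tmul, hvp1, hvp2]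
      cases a
      simp
  · exact coassoc_aux
  · exact cocomm_aux
  · exact fun a => ⟨counit_left_aux a, counit_right_aux a⟩
  · exact frobenius_aux
  · intro r
    simp [εV_apply, ηV_apply, hvp1, hvp2]
    ring
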